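/- Let K be a complete r-uniform r-partite hypergraph (r ≥ 3) with a spanning k-coloring, where k = r+t, and suppose no single monochromatic component covers the whole vertex set. Then for any two vertices v, w lying in different partite classes, the Hamming distance between their component vectors satisfies δ(v,w) ≤ t+1. -/
import Mathlib


open Classical

variable {V : Type*}

/-- `e` is an edge of the complete `r`-uniform `r`-partite hypergraph with
partition `part`: it meets every class in exactly one vertex. -/
def IsPartiteEdge {r : ℕ} (part : V → Fin r) (e : Finset V) : Prop :=
  ∀ i : Fin r, (e.filter fun v => part v = i).card = 1

/-- `e` is an edge of the complete `r`-uniform `(r,ℓ)`-partite hypergraph: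
an `r`-set meeting every class in at most `ℓ` vertices. -/
def IsRLEdge {r : ℕ} (part : V → Fin r) (ℓ : ℕ) (e : Finset V) : Prop :=
  e.card = r ∧ ∀ i : Fin r, (e.filter fun v => part v = i).card ≤ ℓ

/-- An edge is friendly if it meets at most one class in exactly `ℓ` vertices. -/
def Friendly {r : ℕ} (part : V → Fin r) (ℓ : ℕ) (e : Finset V) : Prop :=
  (Finset.univ.filter fun i : Fin r => (e.filter fun v => part v = i).card = ℓ).card ≤ 1

/-- `u` and `v` lie in the same monochromatic component of color `c` of the
hypergraph with edge predicate `E` and edge coloring `χ`. -/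
def MonoConn {k : ℕ} (E : Finset V → Prop) (χ : Finset V → Fin k) (c : Fin k)
    (u v : V) : Prop :=
  Relation.ReflTransGen (fun a b => ∃ e : Finset V, E e ∧ χ e = c ∧ a ∈ e ∧ b ∈ e) u v

/-- The coloring `χ` is spanning: every vertex is incident with an edge of every color. -/
def Spanning {k : ℕ} (E : Finset V → Prop) (χ : Finset V → Fin k) : Prop :=
  ∀ v : V, ∀ c : Fin k, ∃ e : Finset V, E e ∧ χ e = c ∧ v ∈ e

/-- The vertex set can be covered by at most `m` monochromatic components. -/
def CoversBy {k : ℕ} (E : Finset V → Prop) (χ : Finset V → Fin k) (m : ℕ) : Prop :=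
  ∃ f : Fin m → Fin k × V, ∀ v : V, ∃ i : Fin m, MonoConn E χ (f i).1 (f i).2 v

/-- Hamming distance of the component vectors of two vertices: the number of
colors `c` for which they lie in different monochromatic components of color `c`. -/
noncomputable def HamDist {k : ℕ} (E : Finset V → Prop) (χ : Finset V → Fin k)
    (v w : V) : ℕ :=
  (Finset.univ.filter fun c : Fin k => ¬ MonoConn E χ c v w).card

theorem stmt_5 [Fintype V] {r t : ℕ} (hr : 3 ≤ r) (ht : 1 ≤ t)
    (part : V → Fin r) (hne : ∀ i : Fin r, ∃ v, part v = i)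
    (χ : Finset V → Fin (r + t)) (hs : Spanning (IsPartiteEdge part) χ)
    (hnc : ¬ ∃ (c : Fin (r + t)) (w : V), ∀ u : V, MonoConn (IsPartiteEdge part) χ c w u)
    (v w : V) (hvw : part v ≠ part w) :
    HamDist (IsPartiteEdge part) χ v w ≤ t + 1 := by
  classical
  set E := IsPartiteEdge part with hE
  -- key: for each color c and class i, some vertex of class i is not c-connected to v
  have key : ∀ (c : Fin (r+t)) (i : Fin r), ∃ u, part u = i ∧ ¬ MonoConn E χ c v u := by
    intro c i
    by_contra h
    push_neg at h
    apply hnc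
    refine ⟨c, v, fun x => ?_⟩
    obtain ⟨e, he, hce, hxe⟩ := hs x c
    obtain ⟨y, hy⟩ := Finset.card_eq_one.mp (he i)
    have hyi : y ∈ e.filter fun u => part u = i := hy ▸ Finset.mem_singleton_self y
    rw [Finset.mem_filter] at hyi
    exact (h y hyi.2).tail ⟨e, he, hce, hyi.1, hxe⟩
  set A : Finset (Fin (r+t)) := Finset.univ.filter (fun c => MonoConn E χ c v w) with hAdef
  have hsum : A.card + (Finset.univ.filter fun c : Fin (r+t) => ¬ MonoConn E χ c v w).card
      = r + t := by
    rw [hAdef]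
    rw [Finset.card_filter_add_card_filter_not, Finset.card_univ, Fintype.card_fin]
  have hge : r - 1 ≤ A.card := by
    by_contra hlt
    push_neg at hlt
    -- A.card ≤ r - 2
    set s : Finset (Fin r) := Finset.univ \ {part v, part w} with hsdef
    have hcard2 : ({part v, part w} : Finset (Fin r)).card = 2 := by
      rw [Finset.card_insert_of_notMem (by simpa using hvw), Finset.card_singleton]
    have hscard : s.card = r - 2 := by
      rw [hsdef, Finset.card_sdiff_of_subset (Finset.subset_univ _), Finset.card_univ,
        Fintype.card_fin, hcard2]
    have hAle : A.card ≤ s.card := by omega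
    have hemb : Nonempty (↥A ↪ ↥s) := by
      rw [Function.Embedding.nonempty_iff_card_le, Fintype.card_coe, Fintype.card_coe]
      exact hAle
    obtain ⟨φ⟩ := hemb
    -- blocking vertices
    have hu : ∀ a : ↥A, ∃ u, part u = (φ a : Fin r) ∧ ¬ MonoConn E χ (a : Fin (r+t)) v u :=
      fun a => key a.1 (φ a : Fin r)
    choose u hupart huconn using hu
    -- build the edge
    set g : Fin r → V := fun i =>
      if i = part v then v
      else if i = part w then w
      else if h : ∃ a : ↥A, (φ a : Fin r) = i then u h.choose
      else (hne i).choose with hgdef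
    have part_g : ∀ i, part (g i) = i := by
      intro i
      rw [hgdef]
      by_cases h1 : i = part v
      · simp [h1]
      · by_cases h2 : i = part w
        · simp [h1, h2, Ne.symm hvw]
        · by_cases h3 : ∃ a : ↥A, (φ a : Fin r) = i
          · simp only [h1, h2, h3, if_false, dif_pos]
            rw [hupart]
            exact h3.choose_spec
          · simp only [h1, h2, h3, if_false, dif_neg, not_false_iff]
            exact (hne i).choose_spec
    set e : Finset V := Finset.image g Finset.univ with hedef
    have he : IsPartiteEdge part e := by
      intro i
      have : e.filter (fun x => part x = i) = {g i} := by
        ext x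
        simp only [Finset.mem_filter, Finset.mem_singleton, hedef, Finset.mem_image,
          Finset.mem_univ, true_and]
        constructor
        · rintro ⟨⟨j, rfl⟩, hpx⟩
          rw [part_g j] at hpx
          rw [hpx]
        · rintro rfl
          exact ⟨⟨i, rfl⟩, part_g i⟩
      rw [this, Finset.card_singleton]
    have hv : v ∈ e := by
      rw [hedef]
      refine Finset.mem_image.mpr ⟨part v, Finset.mem_univ _, ?_⟩
      rw [hgdef]; simp
    have hw : w ∈ e := by
      rw [hedef]
      refine Finset.mem_image.mpr ⟨part w, Finset.mem_univ _, ?_⟩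
      rw [hgdef]
      simp [hvw.symm]
    have hc : MonoConn E χ (χ e) v w := Relation.ReflTransGen.single ⟨e, he, rfl, hv, hw⟩
    have cA : χ e ∈ A := by
      rw [hAdef]; exact Finset.mem_filter.mpr ⟨Finset.mem_univ _, hc⟩
    set a₀ : ↥A := ⟨χ e, cA⟩ with ha0
    have hi_s : (φ a₀ : Fin r) ∈ s := (φ a₀).2
    have hi_s' : (↑(φ a₀) : Fin r) ∈ Finset.univ \ ({part v, part w} : Finset (Fin r)) := hi_s
    simp only [Finset.mem_sdiff, Finset.mem_insert, Finset.mem_singleton] at hi_s'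
    have hi1 : (φ a₀ : Fin r) ≠ part v := fun h => hi_s'.2 (Or.inl h)
    have hi2 : (φ a₀ : Fin r) ≠ part w := fun h => hi_s'.2 (Or.inr h)
    have hex : ∃ a : ↥A, (φ a : Fin r) = (φ a₀ : Fin r) := ⟨a₀, rfl⟩
    have hgval : g (φ a₀ : Fin r) = u a₀ := by
      rw [hgdef]
      simp only [hi1, hi2, hex, if_false, dif_pos]
      congr 1
      exact φ.injective (Subtype.ext hex.choose_spec)
    have hmem : u a₀ ∈ e := by
      rw [hedef]
      exact Finset.mem_image.mpr ⟨(φ a₀ : Fin r), Finset.mem_univ _, hgval⟩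
    exact huconn a₀ (Relation.ReflTransGen.single ⟨e, he, rfl, hv, hmem⟩)
  unfold HamDist
  omega
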